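/- arXiv:2405.05246 — 2 statements merged into one kernel-verified Lean document; each statement's English description precedes it below -/
import Mathlib

section
/- Assume (A0) and set ᾱ := limsup_{k→∞} α_k ∈ [0,∞] and β̄ := limsup_{k→∞} β_k ∈ [0,∞]. If ᾱ = ∞ then β̄ = ∞; and if β̄ = ∞ then 𝒱 has at most one element. -/
open Finset Filter Topology MeasureTheory
open scoped ENNReal

/-- `alphaSeq a b k = (a_1 ⋯ a_k)/(b_1 ⋯ b_k)`, with `alphaSeq a b 0 = 1`. -/
noncomputable def alphaSeq (a b : ℕ → ℝ) (k : ℕ) : ℝ :=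
  ∏ i ∈ Finset.Icc 1 k, (a i / b i)

/-- `betaSeq a b k = 1/b_k + a_k/(b_k b_{k-1}) + ⋯ + (a_k ⋯ a_2)/(b_k ⋯ b_1)`,
with `betaSeq a b 0 = 0`. -/
noncomputable def betaSeq (a b : ℕ → ℝ) (k : ℕ) : ℝ :=
  ∑ j ∈ Finset.Icc 1 k, (∏ i ∈ Finset.Icc (j+1) k, a i) / (∏ i ∈ Finset.Icc j k, b i)

/-- The stable traffic equation: `ρ 0 = 1` and
`(b_i + a_{i+1}) ρ_i = a_i ρ_{i-1} + b_{i+1} ρ_{i+1}` for all `i ≥ 1`. -/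
def IsSTE (a b : ℕ → ℝ) (ρ : ℕ → ℝ) : Prop :=
  ρ 0 = 1 ∧ ∀ i, 1 ≤ i → (b i + a (i+1)) * ρ i = a i * ρ (i-1) + b (i+1) * ρ (i+1)

/-- An admissible solution of the stable traffic equation: moreover `ρ k ∈ (0,1)` for `k ≥ 1`. -/
def IsAdmissible (a b : ℕ → ℝ) (ρ : ℕ → ℝ) : Prop :=
  IsSTE a b ρ ∧ ∀ k, 1 ≤ k → ρ k ∈ Set.Ioo (0:ℝ) 1

/-- The set `𝒱` of `v` such that `α + v β` is an admissible solution. -/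
def speedSet (a b : ℕ → ℝ) : Set ℝ :=
  {v : ℝ | IsAdmissible a b (fun k => alphaSeq a b k + v * betaSeq a b k)}

lemma betaSeq_nonneg (a b : ℕ → ℝ) (ha : ∀ k, 1 ≤ k → 0 < a k) (hb : ∀ k, 1 ≤ k → 0 < b k)
    (k : ℕ) : 0 ≤ betaSeq a b k := by
  apply Finset.sum_nonneg
  intro j hj
  rw [Finset.mem_Icc] at hj
  apply div_nonneg
  · exact le_of_lt <| Finset.prod_pos fun i hi => ha i (by have := (Finset.mem_Icc.mp hi).1; omega)
  · exact le_of_lt <| Finset.prod_pos fun i hi => hb i ((Finset.mem_Icc.mp hi).1.trans' hj.1)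

lemma alpha_le (a b : ℕ → ℝ) (ha : ∀ k, 1 ≤ k → 0 < a k) (hb : ∀ k, 1 ≤ k → 0 < b k)
    (k : ℕ) (hk : 1 ≤ k) : alphaSeq a b k ≤ a 1 * betaSeq a b k := by
  have hterm : (∏ i ∈ Finset.Icc 2 k, a i) / (∏ i ∈ Finset.Icc 1 k, b i) ≤ betaSeq a b k := by
    rw [betaSeq]
    show (∏ i ∈ Finset.Icc (1+1) k, a i) / (∏ i ∈ Finset.Icc 1 k, b i) ≤ _
    apply Finset.single_le_sum (f := fun j => (∏ i ∈ Finset.Icc (j+1) k, a i) / (∏ i ∈ Finset.Icc j k, b i))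
    · intro j hj
      rw [Finset.mem_Icc] at hj
      apply div_nonneg
      · exact le_of_lt <| Finset.prod_pos fun i hi => ha i ((Finset.mem_Icc.mp hi).1.trans' (by omega))
      · exact le_of_lt <| Finset.prod_pos fun i hi => hb i ((Finset.mem_Icc.mp hi).1.trans' hj.1)
    · exact Finset.mem_Icc.mpr ⟨le_refl 1, hk⟩
  have hsplit : Finset.Icc 1 k = insert 1 (Finset.Icc 2 k) := by
    ext x; simp only [Finset.mem_Icc, Finset.mem_insert]; omega
  have h1 : (1:ℕ) ∉ Finset.Icc 2 k := by simp
  have hbpos : (0:ℝ) < ∏ i ∈ Finset.Icc 1 k, b i :=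
    Finset.prod_pos fun i hi => hb i ((Finset.mem_Icc.mp hi).1)
  have halpha : alphaSeq a b k = a 1 * ((∏ i ∈ Finset.Icc 2 k, a i) / (∏ i ∈ Finset.Icc 1 k, b i)) := by
    rw [alphaSeq, Finset.prod_div_distrib]
    rw [show (∏ i ∈ Finset.Icc 1 k, a i) = a 1 * ∏ i ∈ Finset.Icc 2 k, a i by
      rw [hsplit, Finset.prod_insert h1]]
    ring
  rw [halpha]
  exact mul_le_mul_of_nonneg_left hterm (le_of_lt (ha 1 le_rfl))

/-- Under (A0): if limsup alpha_k = ∞ then limsup beta_k = ∞; and if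
limsup beta_k = ∞ then 𝒱 has at most one element. -/
theorem stmt6 (a b : ℕ → ℝ) (ha : ∀ k, 1 ≤ k → 0 < a k) (hb : ∀ k, 1 ≤ k → 0 < b k) :
    (Filter.limsup (fun k => ENNReal.ofReal (alphaSeq a b k)) Filter.atTop = ⊤ →
      Filter.limsup (fun k => ENNReal.ofReal (betaSeq a b k)) Filter.atTop = ⊤) ∧
    (Filter.limsup (fun k => ENNReal.ofReal (betaSeq a b k)) Filter.atTop = ⊤ →
      (speedSet a b).Subsingleton) := by
  constructor
  · intro halpha
    by_contra hbeta
    have hB : Filter.limsup (fun k => ENNReal.ofReal (betaSeq a b k)) Filter.atTop < ⊤ :=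
      lt_top_iff_ne_top.mpr hbeta
    set B := Filter.limsup (fun k => ENNReal.ofReal (betaSeq a b k)) Filter.atTop with hBdef
    have hev : ∀ᶠ k in Filter.atTop, ENNReal.ofReal (betaSeq a b k) < B + 1 :=
      Filter.eventually_lt_of_limsup_lt (lt_of_lt_of_le (ENNReal.lt_add_right hbeta one_ne_zero) le_rfl)
    have hev2 : ∀ᶠ k in Filter.atTop,
        ENNReal.ofReal (alphaSeq a b k) ≤ ENNReal.ofReal (a 1) * (B + 1) := by
      filter_upwards [hev, Filter.eventually_ge_atTop 1] with k hk hk1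
      calc ENNReal.ofReal (alphaSeq a b k) ≤ ENNReal.ofReal (a 1 * betaSeq a b k) :=
            ENNReal.ofReal_le_ofReal (alpha_le a b ha hb k hk1)
        _ = ENNReal.ofReal (a 1) * ENNReal.ofReal (betaSeq a b k) :=
            ENNReal.ofReal_mul (le_of_lt (ha 1 le_rfl))
        _ ≤ ENNReal.ofReal (a 1) * (B + 1) := by
            exact mul_le_mul_right hk.le _
    have : Filter.limsup (fun k => ENNReal.ofReal (alphaSeq a b k)) Filter.atTop
        ≤ ENNReal.ofReal (a 1) * (B + 1) := Filter.limsup_le_of_le (by isBoundedDefault) hev2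
    rw [halpha] at this
    have : ENNReal.ofReal (a 1) * (B + 1) < ⊤ :=
      ENNReal.mul_lt_top ENNReal.ofReal_lt_top (ENNReal.add_lt_top.mpr ⟨hB, ENNReal.one_lt_top⟩)
    exact absurd (top_le_iff.mp ‹_›) (by exact fun h => (lt_irrefl _ (h ▸ this)))
  · intro hbeta v hv w hw
    by_contra hne
    have hvw : (0:ℝ) < |v - w| := abs_pos.mpr (sub_ne_zero.mpr hne)
    have hev : ∀ᶠ k in Filter.atTop,
        ENNReal.ofReal (betaSeq a b k) ≤ ENNReal.ofReal (|v - w|⁻¹) := by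
      filter_upwards [Filter.eventually_ge_atTop 1] with k hk1
      have h1 := hv.2 k hk1
      have h2 := hw.2 k hk1
      simp only [Set.mem_Ioo] at h1 h2
      have habs : |(v - w) * betaSeq a b k| < 1 := by
        rw [abs_lt]
        constructor <;> nlinarith [h1.1, h1.2, h2.1, h2.2]
      have hbnn := betaSeq_nonneg a b ha hb k
      have : |v - w| * betaSeq a b k < 1 := by
        rwa [abs_mul, abs_of_nonneg hbnn] at habs
      have hble : betaSeq a b k ≤ |v - w|⁻¹ := by
        rw [← one_div, le_div_iff₀ hvw]
        nlinarith [this]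
      exact ENNReal.ofReal_le_ofReal hble
    have hle : Filter.limsup (fun k => ENNReal.ofReal (betaSeq a b k)) Filter.atTop
        ≤ ENNReal.ofReal (|v - w|⁻¹) := Filter.limsup_le_of_le (by isBoundedDefault) hev
    rw [hbeta] at hle
    exact absurd (top_le_iff.mp hle) (by simp [ENNReal.ofReal_ne_top])
end

section
/- Assume (A0). If ρ = α + vβ is an admissible solution of the stable traffic equation, then −a_{k+1} ρ_k < v for every k ≥ 0, and v < b_k ρ_k for every k ≥ 1. -/
open Finset Filter Topology MeasureTheory
open scoped ENNReal

lemma alphaSeq_succ (a b : ℕ → ℝ) (k : ℕ) :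
    alphaSeq a b (k+1) = alphaSeq a b k * (a (k+1) / b (k+1)) := by
  unfold alphaSeq
  rw [Finset.prod_Icc_succ_top (by omega)]

lemma betaSeq_succ (a b : ℕ → ℝ) (k : ℕ) :
    betaSeq a b (k+1) = (a (k+1) / b (k+1)) * betaSeq a b k + 1 / b (k+1) := by
  unfold betaSeq
  rw [Finset.sum_Icc_succ_top (by omega)]
  have h1 : ∀ j ∈ Finset.Icc 1 k,
      (∏ i ∈ Finset.Icc (j+1) (k+1), a i) / (∏ i ∈ Finset.Icc j (k+1), b i)
      = (a (k+1) / b (k+1)) * ((∏ i ∈ Finset.Icc (j+1) k, a i) / (∏ i ∈ Finset.Icc j k, b i)) := by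
    intro j hj
    rw [Finset.mem_Icc] at hj
    rw [Finset.prod_Icc_succ_top (by omega : j + 1 ≤ k + 1),
        Finset.prod_Icc_succ_top (by omega : j ≤ k + 1), mul_div_mul_comm]
    ring
  rw [Finset.sum_congr rfl h1, ← Finset.mul_sum]
  have h2 : Finset.Icc (k+1+1) (k+1) = (∅ : Finset ℕ) := Finset.Icc_eq_empty (by omega)
  rw [h2, Finset.prod_empty, Finset.Icc_self, Finset.prod_singleton]

/-- Under (A0), if rho = alpha + v beta is admissible, then
-a_{k+1} rho_k < v for every k ≥ 0 and v < b_k rho_k for every k ≥ 1. -/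
theorem stmt13 (a b : ℕ → ℝ) (ha : ∀ k, 1 ≤ k → 0 < a k) (hb : ∀ k, 1 ≤ k → 0 < b k)
    (v : ℝ) (ρ : ℕ → ℝ)
    (hρ : ρ = fun k => alphaSeq a b k + v * betaSeq a b k)
    (hadm : IsAdmissible a b ρ) :
    (∀ k : ℕ, -(a (k+1) * ρ k) < v) ∧ (∀ k, 1 ≤ k → v < b k * ρ k) := by
  have flow : ∀ k : ℕ, b (k+1) * ρ (k+1) = a (k+1) * ρ k + v := by
    intro k
    have hbne : b (k+1) ≠ 0 := ne_of_gt (hb _ (by omega))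
    subst hρ
    simp only [alphaSeq_succ, betaSeq_succ]
    field_simp
    ring
  have hpos : ∀ k : ℕ, 0 < ρ k := by
    intro k
    cases k with
    | zero => rw [hadm.1.1]; norm_num
    | succ m => exact (hadm.2 (m+1) (by omega)).1
  constructor
  · intro k
    have h1 := flow k
    have h2 : 0 < b (k+1) * ρ (k+1) :=
      mul_pos (hb _ (by omega)) (hpos _)
    linarith
  · intro k hk
    obtain ⟨m, rfl⟩ : ∃ m, k = m + 1 := ⟨k - 1, by omega⟩
    have h1 := flow m
    have h2 : 0 < a (m+1) * ρ m := mul_pos (ha _ (by omega)) (hpos _)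
    linarith
end
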